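/- With Ψ an indefinite integral of a bounded positive Riemann integrable ψ on I, and Φ satisfying Φ(J) ⊂ J for |J| < η, every interval J with |J| < η satisfies |Φ(J)|_Ψ ≤ Ψ(d) − Ψ(c) where J = [c,d]; consequently for any partition P of I into intervals of length less than η, u(f,Ψ,P^1) − l(f,Ψ,P^1) ≤ U(f,Ψ,P) − L(f,Ψ,P) for any bounded f on I. -/

import Mathlib

open Set Filter

/-- A partition of `[a,b]` given by cut points `x 0 = a < x 1 < ... < x n = b`. -/
structure RSPartition (a b : ℝ) where
  n : ℕ
  hn : 0 < n
  x : ℕ → ℝ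
  mono : ∀ i < n, x i < x (i + 1)
  left : x 0 = a
  right : x n = b

/-- Upper Riemann-Stieltjes sum of `f` w.r.t. `Ψ` along a partition. -/
noncomputable def upperSum (f Ψ : ℝ → ℝ) {a b : ℝ} (P : RSPartition a b) : ℝ :=
  ∑ k ∈ Finset.range P.n,
    sSup (f '' Set.Icc (P.x k) (P.x (k + 1))) * (Ψ (P.x (k + 1)) - Ψ (P.x k))

/-- Lower Riemann-Stieltjes sum of `f` w.r.t. `Ψ` along a partition. -/
noncomputable def lowerSum (f Ψ : ℝ → ℝ) {a b : ℝ} (P : RSPartition a b) : ℝ :=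
  ∑ k ∈ Finset.range P.n,
    sInf (f '' Set.Icc (P.x k) (P.x (k + 1))) * (Ψ (P.x (k + 1)) - Ψ (P.x k))

/-- Upper Riemann-Stieltjes integral `U(f,Ψ)`. -/
noncomputable def upperInt (f Ψ : ℝ → ℝ) (a b : ℝ) : ℝ :=
  ⨅ P : RSPartition a b, upperSum f Ψ P

/-- Lower Riemann-Stieltjes integral `L(f,Ψ)`. -/
noncomputable def lowerInt (f Ψ : ℝ → ℝ) (a b : ℝ) : ℝ :=
  ⨆ P : RSPartition a b, lowerSum f Ψ P

/-- `f` is Riemann-Stieltjes integrable w.r.t. `Ψ` on `[a,b]`. -/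
def RSIntegrable (f Ψ : ℝ → ℝ) (a b : ℝ) : Prop :=
  upperInt f Ψ a b = lowerInt f Ψ a b

/-- The Riemann-Stieltjes integral `∫_[a,b] f dΨ` (meaningful when `RSIntegrable`). -/
noncomputable def RSIntegral (f Ψ : ℝ → ℝ) (a b : ℝ) : ℝ := upperInt f Ψ a b

/-- Riemann integrability is the case `Ψ = id`. -/
def RIntegrable (f : ℝ → ℝ) (a b : ℝ) : Prop := RSIntegrable f id a b

/-- Riemann integral `∫_[a,b] f`. -/
noncomputable def RIntegral (f : ℝ → ℝ) (a b : ℝ) : ℝ := RSIntegral f id a b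

/-- The `ψ`-length `|S|_Ψ = ∫_I χ_S ψ` of a subset `S ⊆ [a,b]`. -/
noncomputable def lengthW (ψ : ℝ → ℝ) (a b : ℝ) (S : Set ℝ) : ℝ :=
  RIntegral (S.indicator ψ) a b

/-- Modified upper Riemann sum `u(f,Ψ,P¹)` (with `Ψ' = ψ` and set map `Φ`). -/
noncomputable def uMod (f ψ : ℝ → ℝ) (Φ : Set ℝ → Set ℝ) {a b : ℝ} (P : RSPartition a b) : ℝ :=
  ∑ k ∈ Finset.range P.n,
    sSup (f '' Φ (Set.Icc (P.x k) (P.x (k + 1)))) *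
      lengthW ψ a b (Φ (Set.Icc (P.x k) (P.x (k + 1))))

/-- Modified lower Riemann sum `l(f,Ψ,P¹)`. -/
noncomputable def lMod (f ψ : ℝ → ℝ) (Φ : Set ℝ → Set ℝ) {a b : ℝ} (P : RSPartition a b) : ℝ :=
  ∑ k ∈ Finset.range P.n,
    sInf (f '' Φ (Set.Icc (P.x k) (P.x (k + 1)))) *
      lengthW ψ a b (Φ (Set.Icc (P.x k) (P.x (k + 1))))

/-- `u(f,Ψ) = inf_P u(f,Ψ,P¹)`. -/
noncomputable def uModInt (f ψ : ℝ → ℝ) (Φ : Set ℝ → Set ℝ) (a b : ℝ) : ℝ :=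
  ⨅ P : RSPartition a b, uMod f ψ Φ P

/-- `l(f,Ψ) = sup_P l(f,Ψ,P¹)`. -/
noncomputable def lModInt (f ψ : ℝ → ℝ) (Φ : Set ℝ → Set ℝ) (a b : ℝ) : ℝ :=
  ⨆ P : RSPartition a b, lMod f ψ Φ P

/-- An arbitrary modified Riemann sum `s(f,Ψ,P¹)` with sample points `ξ k ∈ Φ(I_k)`. -/
noncomputable def sMod (f ψ : ℝ → ℝ) (Φ : Set ℝ → Set ℝ) {a b : ℝ} (P : RSPartition a b)
    (ξ : ℕ → ℝ) : ℝ :=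
  ∑ k ∈ Finset.range P.n,
    f (ξ k) * lengthW ψ a b (Φ (Set.Icc (P.x k) (P.x (k + 1))))

/-- An arbitrary Riemann-Stieltjes sum with sample points `ξ k ∈ I_k`. -/
noncomputable def riemannSum (f Ψ : ℝ → ℝ) {a b : ℝ} (P : RSPartition a b) (ξ : ℕ → ℝ) : ℝ :=
  ∑ k ∈ Finset.range P.n, f (ξ k) * (Ψ (P.x (k + 1)) - Ψ (P.x k))

/-- `f` is bounded on `[a,b]`. -/
def BoundedOnI (f : ℝ → ℝ) (a b : ℝ) : Prop := ∃ M, ∀ x ∈ Set.Icc a b, |f x| ≤ M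

/-- The set of cut points of a partition. -/
def cuts {a b : ℝ} (P : RSPartition a b) : Set ℝ := {y | ∃ i ≤ P.n, P.x i = y}


lemma part_x_mono {a b : ℝ} (P : RSPartition a b) {i j : ℕ} (hij : i ≤ j) (hj : j ≤ P.n) :
    P.x i ≤ P.x j := by
  induction j with
  | zero => simp_all
  | succ m ih =>
    rcases Nat.eq_or_lt_of_le hij with h | h
    · rw [h]
    · exact le_trans (ih (Nat.lt_succ_iff.mp h) (le_trans (Nat.le_succ m) hj))
        (le_of_lt (P.mono m (Nat.lt_of_succ_le hj)))

lemma part_x_mem {a b : ℝ} (P : RSPartition a b) {i : ℕ} (hi : i ≤ P.n) :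
    P.x i ∈ Set.Icc a b := by
  constructor
  · have h := part_x_mono P (Nat.zero_le i) hi
    rwa [P.left] at h
  · have h := part_x_mono P hi le_rfl
    rwa [P.right] at h

lemma part_icc_subset {a b : ℝ} (P : RSPartition a b) {k : ℕ} (hk : k < P.n) :
    Set.Icc (P.x k) (P.x (k + 1)) ⊆ Set.Icc a b :=
  Set.Icc_subset_Icc (part_x_mem P (le_of_lt hk)).1 (part_x_mem P hk).2

def RSPartition.single {a b : ℝ} (h : a < b) : RSPartition a b where
  n := 1
  hn := one_pos
  x := fun i => if i = 0 then a else b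
  mono := by intro i hi; interval_cases i; simpa using h
  left := rfl
  right := rfl

lemma partition_nonempty {a b : ℝ} (h : a < b) : Nonempty (RSPartition a b) :=
  ⟨RSPartition.single h⟩

lemma partition_isEmpty {a b : ℝ} (h : b ≤ a) : IsEmpty (RSPartition a b) := by
  constructor
  intro P
  have h0 := P.mono 0 P.hn
  rw [P.left] at h0
  have h1 := part_x_mono P (Nat.one_le_iff_ne_zero.mpr (Nat.pos_iff_ne_zero.mp P.hn)) le_rfl
  rw [P.right] at h1
  exact absurd (lt_of_lt_of_le h0 h1) (not_lt.mpr h)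

lemma upperInt_of_ge {f Ψ : ℝ → ℝ} {a b : ℝ} (h : b ≤ a) : upperInt f Ψ a b = 0 := by
  have := partition_isEmpty (a := a) (b := b) h
  rw [upperInt, iInf, Set.range_eq_empty, Real.sInf_empty]
lemma sSup_image_nonneg {g : ℝ → ℝ} {s : Set ℝ} (hs : s.Nonempty)
    (hg : ∀ x ∈ s, 0 ≤ g x) : 0 ≤ sSup (g '' s) := by
  by_cases hb : BddAbove (g '' s)
  · obtain ⟨x, hx⟩ := hs
    exact le_trans (hg x hx) (le_csSup hb ⟨x, hx, rfl⟩)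
  · rw [Real.sSup_of_not_bddAbove hb]

lemma sSup_image_le {g : ℝ → ℝ} {s : Set ℝ} {C : ℝ} (hC : 0 ≤ C)
    (hg : ∀ x ∈ s, g x ≤ C) : sSup (g '' s) ≤ C := by
  apply Real.sSup_le _ hC
  rintro y ⟨x, hx, rfl⟩
  exact hg x hx

lemma upperSum_nonneg {g : ℝ → ℝ} {a b : ℝ} (hg : ∀ x ∈ Set.Icc a b, 0 ≤ g x)
    (P : RSPartition a b) : 0 ≤ upperSum g id P := by
  apply Finset.sum_nonneg
  intro k hk
  rw [Finset.mem_range] at hk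
  have hle : P.x k ≤ P.x (k + 1) := le_of_lt (P.mono k hk)
  apply mul_nonneg
  · exact sSup_image_nonneg (Set.nonempty_Icc.mpr hle)
      (fun x hx => hg x (part_icc_subset P hk hx))
  · simpa using hle

lemma upperInt_nonneg {g : ℝ → ℝ} {a b : ℝ} (hg : ∀ x ∈ Set.Icc a b, 0 ≤ g x) :
    0 ≤ upperInt g id a b :=
  Real.iInf_nonneg (fun P => upperSum_nonneg hg P)

lemma upperSum_mono_f {g1 g2 : ℝ → ℝ} {a b : ℝ} {C : ℝ}
    (hle : ∀ x ∈ Set.Icc a b, g1 x ≤ g2 x) (hC : ∀ x ∈ Set.Icc a b, g2 x ≤ C)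
    (P : RSPartition a b) : upperSum g1 id P ≤ upperSum g2 id P := by
  apply Finset.sum_le_sum
  intro k hk
  rw [Finset.mem_range] at hk
  have hle' : P.x k ≤ P.x (k + 1) := le_of_lt (P.mono k hk)
  have hsub := part_icc_subset P hk
  have hbdd : BddAbove (g2 '' Set.Icc (P.x k) (P.x (k + 1))) := by
    refine ⟨C, ?_⟩
    rintro y ⟨x, hx, rfl⟩
    exact hC x (hsub hx)
  apply mul_le_mul_of_nonneg_right _ (by simpa using hle')
  apply csSup_le ((Set.nonempty_Icc.mpr hle').image g1)
  rintro y ⟨x, hx, rfl⟩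
  exact le_trans (hle x (hsub hx)) (le_csSup hbdd ⟨x, hx, rfl⟩)

lemma upperInt_mono_f {g1 g2 : ℝ → ℝ} {a b : ℝ} {C : ℝ}
    (h1 : ∀ x ∈ Set.Icc a b, 0 ≤ g1 x)
    (hle : ∀ x ∈ Set.Icc a b, g1 x ≤ g2 x) (hC : ∀ x ∈ Set.Icc a b, g2 x ≤ C) :
    upperInt g1 id a b ≤ upperInt g2 id a b := by
  apply ciInf_mono
  · exact ⟨0, by rintro y ⟨P, rfl⟩; exact upperSum_nonneg h1 P⟩
  · exact fun P => upperSum_mono_f hle hC P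

lemma upperSum_congr {g1 g2 : ℝ → ℝ} {a b : ℝ}
    (h : ∀ x ∈ Set.Icc a b, g1 x = g2 x) (P : RSPartition a b) :
    upperSum g1 id P = upperSum g2 id P := by
  apply Finset.sum_congr rfl
  intro k hk
  rw [Finset.mem_range] at hk
  congr 1
  apply congrArg
  apply Set.image_congr
  intro x hx
  exact h x (part_icc_subset P hk hx)

lemma upperInt_congr {g1 g2 : ℝ → ℝ} {a b : ℝ}
    (h : ∀ x ∈ Set.Icc a b, g1 x = g2 x) : upperInt g1 id a b = upperInt g2 id a b := by
  unfold upperInt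
  exact iInf_congr (fun P => upperSum_congr h P)
noncomputable def concatFun {a c b : ℝ} (P1 : RSPartition a c) (P2 : RSPartition c b) : ℕ → ℝ :=
  fun i => if i ≤ P1.n then P1.x i else P2.x (i - P1.n)

lemma concatFun_le {a c b : ℝ} (P1 : RSPartition a c) (P2 : RSPartition c b) {i : ℕ}
    (h : i ≤ P1.n) : concatFun P1 P2 i = P1.x i := if_pos h

lemma concatFun_add {a c b : ℝ} (P1 : RSPartition a c) (P2 : RSPartition c b) (k : ℕ) :
    concatFun P1 P2 (P1.n + k) = P2.x k := by
  rcases Nat.eq_zero_or_pos k with rfl | hk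
  · rw [concatFun, if_pos (by omega), Nat.add_zero, P1.right]
    exact P2.left.symm
  · rw [concatFun, if_neg (by omega)]
    congr 1
    omega

noncomputable def RSPartition.concat {a c b : ℝ} (P1 : RSPartition a c) (P2 : RSPartition c b) :
    RSPartition a b where
  n := P1.n + P2.n
  hn := Nat.add_pos_left P1.hn _
  x := concatFun P1 P2
  mono := by
    intro i hi
    rcases Nat.lt_or_ge i P1.n with h | h
    · rw [concatFun_le P1 P2 (le_of_lt h), concatFun_le P1 P2 (Nat.succ_le_of_lt h)]
      exact P1.mono i h
    · obtain ⟨k, rfl⟩ := Nat.exists_eq_add_of_le h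
      have : P1.n + k + 1 = P1.n + (k + 1) := by omega
      rw [this, concatFun_add, concatFun_add]
      exact P2.mono k (by omega)
  left := by rw [concatFun_le P1 P2 (Nat.zero_le _), P1.left]
  right := by rw [concatFun_add, P2.right]

lemma upperSum_concat (g : ℝ → ℝ) {a c b : ℝ} (P1 : RSPartition a c) (P2 : RSPartition c b) :
    upperSum g id (P1.concat P2) = upperSum g id P1 + upperSum g id P2 := by
  have hx : (P1.concat P2).x = concatFun P1 P2 := rfl
  have hN : (P1.concat P2).n = P1.n + P2.n := rfl
  unfold upperSum
  rw [hx, hN, Finset.sum_range_add]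
  congr 1
  · apply Finset.sum_congr rfl
    intro k hk
    rw [Finset.mem_range] at hk
    rw [concatFun_le P1 P2 (le_of_lt hk), concatFun_le P1 P2 (Nat.succ_le_of_lt hk)]
  · apply Finset.sum_congr rfl
    intro k hk
    have : P1.n + k + 1 = P1.n + (k + 1) := by omega
    rw [this, concatFun_add, concatFun_add]

lemma upperInt_subadd {g : ℝ → ℝ} {a c b : ℝ} (hac : a ≤ c) (hcb : c ≤ b)
    (hg : ∀ x ∈ Set.Icc a b, 0 ≤ g x) :
    upperInt g id a b ≤ upperInt g id a c + upperInt g id c b := by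
  rcases eq_or_lt_of_le hac with rfl | hac
  · rw [upperInt_of_ge le_rfl, zero_add]
  rcases eq_or_lt_of_le hcb with rfl | hcb
  · rw [upperInt_of_ge le_rfl, add_zero]
  have h1 : Nonempty (RSPartition a c) := partition_nonempty hac
  have h2 : Nonempty (RSPartition c b) := partition_nonempty hcb
  apply le_of_forall_pos_le_add
  intro ε hε
  obtain ⟨s1, ⟨Q1, rfl⟩, hs1⟩ := Real.lt_sInf_add_pos (Set.range_nonempty _) (half_pos hε)
    (s := Set.range (fun P : RSPartition a c => upperSum g id P))
  obtain ⟨s2, ⟨Q2, rfl⟩, hs2⟩ := Real.lt_sInf_add_pos (Set.range_nonempty _) (half_pos hε)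
    (s := Set.range (fun P : RSPartition c b => upperSum g id P))
  have hle : upperInt g id a b ≤ upperSum g id Q1 + upperSum g id Q2 := by
    rw [← upperSum_concat g Q1 Q2, upperInt, iInf]
    exact csInf_le ⟨0, by rintro y ⟨P, rfl⟩; exact upperSum_nonneg hg P⟩ ⟨Q1.concat Q2, rfl⟩
  calc upperInt g id a b ≤ upperSum g id Q1 + upperSum g id Q2 := hle
    _ ≤ (upperInt g id a c + ε/2) + (upperInt g id c b + ε/2) :=
        add_le_add (le_of_lt hs1) (le_of_lt hs2)
    _ = upperInt g id a c + upperInt g id c b + ε := by ring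
noncomputable def splitL {a b : ℝ} (Q : RSPartition a b) (c : ℝ) (K : ℕ)
    (hK1 : 1 ≤ K) (hKm : K ≤ Q.n) (hlt : Q.x (K - 1) < c) : RSPartition a c where
  n := K
  hn := hK1
  x := fun i => if i < K then Q.x i else c
  mono := by
    intro i hi
    rw [if_pos hi]
    rcases Nat.lt_or_ge (i + 1) K with h | h
    · rw [if_pos h]
      exact Q.mono i (by omega)
    · rw [if_neg (by omega)]
      have : i = K - 1 := by omega
      rw [this]
      exact hlt
  left := by rw [if_pos (by omega), Q.left]
  right := by rw [if_neg (by omega)]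

noncomputable def splitL' {a b : ℝ} (Q : RSPartition a b) (c : ℝ) (K : ℕ)
    (hK2 : 2 ≤ K) (hKm : K ≤ Q.n) (heq : Q.x (K - 1) = c) : RSPartition a c where
  n := K - 1
  hn := by omega
  x := Q.x
  mono := fun i hi => Q.mono i (by omega)
  left := Q.left
  right := heq

noncomputable def splitR {a b : ℝ} (Q : RSPartition a b) (c : ℝ) (K : ℕ)
    (hK1 : 1 ≤ K) (hKm : K ≤ Q.n) (hcK : c < Q.x K) : RSPartition c b where
  n := Q.n - K + 1
  hn := by omega
  x := fun i => if i = 0 then c else Q.x (K - 1 + i)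
  mono := by
    intro i hi
    rcases Nat.eq_zero_or_pos i with rfl | hi0
    · rw [if_pos rfl, if_neg (by omega)]
      have : K - 1 + 1 = K := by omega
      rw [this]
      exact hcK
    · rw [if_neg (by omega), if_neg (by omega)]
      have h1 : K - 1 + (i + 1) = (K - 1 + i) + 1 := by omega
      rw [h1]
      exact Q.mono (K - 1 + i) (by omega)
  left := rfl
  right := by
    rw [if_neg (by omega)]
    have : K - 1 + (Q.n - K + 1) = Q.n := by omega
    rw [this, Q.right]
lemma upperInt_superadd {g : ℝ → ℝ} {a c b : ℝ} {C : ℝ} (hac : a ≤ c) (hcb : c ≤ b)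
    (hg : ∀ x ∈ Set.Icc a b, 0 ≤ g x) (hC : ∀ x ∈ Set.Icc a b, g x ≤ C) :
    upperInt g id a c + upperInt g id c b ≤ upperInt g id a b := by
  rcases eq_or_lt_of_le hac with rfl | hac
  · rw [upperInt_of_ge le_rfl, zero_add]
  rcases eq_or_lt_of_le hcb with rfl | hcb
  · rw [upperInt_of_ge le_rfl, add_zero]
  have hab : a < b := lt_trans hac hcb
  have : Nonempty (RSPartition a b) := partition_nonempty hab
  apply le_ciInf
  intro Q
  -- find the first index K with c < Q.x K
  have hex : ∃ j, c < Q.x j := ⟨Q.n, by rw [Q.right]; exact hcb⟩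
  set K := Nat.find hex with hKdef
  have hK : c < Q.x K := Nat.find_spec hex
  have hK1 : 1 ≤ K := by
    by_contra h
    have h0 : K = 0 := by omega
    rw [h0, Q.left] at hK
    exact absurd hK (not_lt.mpr (le_of_lt hac))
  have hKm : K ≤ Q.n := Nat.find_le (by rw [Q.right]; exact hcb)
  have hyK1 : Q.x (K - 1) ≤ c := not_lt.mp (Nat.find_min hex (by omega))
  have hKm' : K - 1 < Q.n := by omega
  have hK1K : K - 1 + 1 = K := by omega
  -- notation for Q's terms
  set t : ℕ → ℝ := fun j =>
    sSup (g '' Set.Icc (Q.x j) (Q.x (j + 1))) * (id (Q.x (j + 1)) - id (Q.x j)) with ht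
  set S : ℝ := sSup (g '' Set.Icc (Q.x (K - 1)) (Q.x K)) with hS
  have hsubKQ : Set.Icc (Q.x (K - 1)) (Q.x K) ⊆ Set.Icc a b := by
    have := part_icc_subset Q hKm'
    rwa [hK1K] at this
  have hbddK : BddAbove (g '' Set.Icc (Q.x (K - 1)) (Q.x K)) :=
    ⟨C, by rintro y ⟨x, hx, rfl⟩; exact hC x (hsubKQ hx)⟩
  -- decomposition of upperSum Q
  have hQdec : upperSum g id Q
      = (∑ j ∈ Finset.range (K - 1), t j) + (S * (Q.x K - Q.x (K - 1))
        + ∑ j ∈ Finset.range (Q.n - K), t (K + j)) := by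
    have h1 : upperSum g id Q = ∑ j ∈ Finset.range Q.n, t j := rfl
    have hm : Q.n = (K - 1) + ((Q.n - K) + 1) := by omega
    rw [h1]
    conv_lhs => rw [hm]
    rw [Finset.sum_range_add, Finset.sum_range_succ']
    have e0 : t (K - 1 + 0) = S * (Q.x K - Q.x (K - 1)) := by
      simp only [ht, hS, Nat.add_zero, hK1K, id]
    have e1 : ∀ j, t (K - 1 + (j + 1)) = t (K + j) := by
      intro j
      congr 1
      omega
    rw [e0]
    rw [Finset.sum_congr rfl (fun j _ => e1 j)]
    ring
  -- right partition and its bound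
  have hR : upperSum g id (splitR Q c K hK1 hKm hK)
      ≤ (∑ j ∈ Finset.range (Q.n - K), t (K + j)) + S * (Q.x K - c) := by
    have hx : (splitR Q c K hK1 hKm hK).x = fun i => if i = 0 then c else Q.x (K - 1 + i) := rfl
    have hn : (splitR Q c K hK1 hKm hK).n = Q.n - K + 1 := rfl
    rw [upperSum, hx, hn, Finset.sum_range_succ']
    apply add_le_add
    · apply le_of_eq
      apply Finset.sum_congr rfl
      intro j hj
      dsimp only
      rw [if_neg (by omega), if_neg (by omega)]
      have e1 : K - 1 + (j + 1) = K + j := by omega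
      have e2 : K - 1 + (j + 1 + 1) = K + j + 1 := by omega
      rw [e1, e2]
    · dsimp only
      rw [if_pos rfl, if_neg (by omega), hK1K]
      have hsub : Set.Icc c (Q.x K) ⊆ Set.Icc (Q.x (K - 1)) (Q.x K) :=
        Set.Icc_subset_Icc hyK1 le_rfl
      have hne : (g '' Set.Icc c (Q.x K)).Nonempty :=
        (Set.nonempty_Icc.mpr (le_of_lt hK)).image g
      have := csSup_le_csSup hbddK hne (Set.image_mono hsub)
      simp only [id]
      exact mul_le_mul_of_nonneg_right this (by linarith)
  -- left partition bound, in both cases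
  have hL : ∃ P1 : RSPartition a c, upperSum g id P1
      ≤ (∑ j ∈ Finset.range (K - 1), t j) + S * (c - Q.x (K - 1)) := by
    rcases eq_or_lt_of_le hyK1 with heq | hlt
    · -- case B : Q.x (K-1) = c
      have hK2 : 2 ≤ K := by
        by_contra h
        have hkeq : K = 1 := by omega
        rw [hkeq] at heq
        norm_num at heq
        rw [Q.left] at heq
        exact absurd heq (ne_of_lt hac)
      refine ⟨splitL' Q c K hK2 hKm heq, ?_⟩
      have hx : (splitL' Q c K hK2 hKm heq).x = Q.x := rfl
      have hn : (splitL' Q c K hK2 hKm heq).n = K - 1 := rfl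
      rw [upperSum, hx, hn]
      have he : (∑ k ∈ Finset.range (K - 1),
          sSup (g '' Set.Icc (Q.x k) (Q.x (k + 1))) * (id (Q.x (k + 1)) - id (Q.x k)))
          = ∑ j ∈ Finset.range (K - 1), t j := rfl
      rw [he, heq, sub_self, mul_zero, add_zero]
    · -- case A : Q.x (K-1) < c
      refine ⟨splitL Q c K hK1 hKm hlt, ?_⟩
      have hx : (splitL Q c K hK1 hKm hlt).x = fun i => if i < K then Q.x i else c := rfl
      have hn : (splitL Q c K hK1 hKm hlt).n = K := rfl
      rw [upperSum, hx, hn]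
      have hKsucc : K = (K - 1) + 1 := by omega
      rw [hKsucc, Finset.sum_range_succ, ← hKsucc]
      apply add_le_add
      · apply le_of_eq
        apply Finset.sum_congr rfl
        intro j hj
        rw [Finset.mem_range] at hj
        dsimp only
        rw [if_pos (by omega), if_pos (by omega)]
      · dsimp only
        rw [if_pos (by omega), if_neg (by omega)]
        have hsub : Set.Icc (Q.x (K - 1)) c ⊆ Set.Icc (Q.x (K - 1)) (Q.x K) :=
          Set.Icc_subset_Icc le_rfl (le_of_lt hK)
        have hne : (g '' Set.Icc (Q.x (K - 1)) c).Nonempty :=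
          (Set.nonempty_Icc.mpr (le_of_lt hlt)).image g
        have := csSup_le_csSup hbddK hne (Set.image_mono hsub)
        simp only [id]
        exact mul_le_mul_of_nonneg_right this (by linarith)
  obtain ⟨P1, hP1⟩ := hL
  have hbdd1 : BddBelow (Set.range fun P : RSPartition a c => upperSum g id P) := by
    refine ⟨0, ?_⟩
    rintro y ⟨P, rfl⟩
    exact upperSum_nonneg (fun x hx => hg x (Set.Icc_subset_Icc le_rfl (le_of_lt hcb) hx)) P
  have hbdd2 : BddBelow (Set.range fun P : RSPartition c b => upperSum g id P) := by
    refine ⟨0, ?_⟩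
    rintro y ⟨P, rfl⟩
    exact upperSum_nonneg (fun x hx => hg x (Set.Icc_subset_Icc (le_of_lt hac) le_rfl hx)) P
  have hU1 : upperInt g id a c ≤ upperSum g id P1 := by
    rw [upperInt, iInf]
    exact csInf_le hbdd1 ⟨P1, rfl⟩
  have hU2 : upperInt g id c b ≤ upperSum g id (splitR Q c K hK1 hKm hK) := by
    rw [upperInt, iInf]
    exact csInf_le hbdd2 ⟨splitR Q c K hK1 hKm hK, rfl⟩
  calc upperInt g id a c + upperInt g id c b
      ≤ upperSum g id P1 + upperSum g id (splitR Q c K hK1 hKm hK) := add_le_add hU1 hU2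
    _ ≤ ((∑ j ∈ Finset.range (K - 1), t j) + S * (c - Q.x (K - 1)))
        + ((∑ j ∈ Finset.range (Q.n - K), t (K + j)) + S * (Q.x K - c)) := add_le_add hP1 hR
    _ = upperSum g id Q := by rw [hQdec]; ring
noncomputable def spikePart (a b δ : ℝ) (h1 : 0 < δ) (h2 : 2 * δ < b - a) : RSPartition a b where
  n := 3
  hn := by omega
  x := fun i => if i = 0 then a else if i = 1 then a + δ else if i = 2 then b - δ else b
  mono := by
    intro i hi
    interval_cases i <;> norm_num <;> linarith
  left := rfl
  right := by norm_num

lemma upperInt_spike {g : ℝ → ℝ} {a b C : ℝ} (hab : a < b)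
    (h0 : ∀ x, a < x → x < b → g x = 0)
    (hg : ∀ x ∈ Set.Icc a b, 0 ≤ g x) (hC : ∀ x ∈ Set.Icc a b, g x ≤ C) :
    upperInt g id a b = 0 := by
  have hC0 : 0 ≤ C := le_trans (hg a (by constructor <;> linarith)) (hC a (by constructor <;> linarith))
  apply le_antisymm _ (upperInt_nonneg hg)
  apply le_of_forall_pos_le_add
  intro ε hε
  rw [zero_add]
  set δ : ℝ := min ((b - a) / 4) (ε / (2 * C + 2)) with hδdef
  have hδ1 : 0 < δ := lt_min (by linarith) (div_pos hε (by linarith))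
  have hδ2 : 2 * δ < b - a := by
    have : δ ≤ (b - a) / 4 := min_le_left _ _
    linarith
  have hδ3 : 2 * C * δ ≤ ε := by
    have h3 : δ ≤ ε / (2 * C + 2) := min_le_right _ _
    have h4 : (2 * C) * δ ≤ (2 * C) * (ε / (2 * C + 2)) :=
      mul_le_mul_of_nonneg_left h3 (by linarith)
    have h5 : (2 * C) * (ε / (2 * C + 2)) ≤ ε := by
      rw [mul_div_assoc']
      rw [div_le_iff₀ (by linarith)]
      nlinarith
    linarith
  set P := spikePart a b δ hδ1 hδ2 with hP
  have hxP : P.x = fun i => if i = 0 then a else if i = 1 then a + δ else if i = 2 then b - δ else b := rfl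
  have hnP : P.n = 3 := rfl
  have hbound : upperSum g id P ≤ 2 * C * δ := by
    rw [upperSum, hxP, hnP]
    have e : Finset.range 3 = {0, 1, 2} := by decide
    rw [e]
    rw [Finset.sum_insert (by decide), Finset.sum_insert (by decide), Finset.sum_singleton]
    dsimp only
    norm_num
    have t0 : sSup (g '' Set.Icc a (a + δ)) * (a + δ - a) ≤ C * δ := by
      have : sSup (g '' Set.Icc a (a + δ)) ≤ C :=
        sSup_image_le hC0 (fun x hx => hC x ⟨hx.1, by rcases hx with ⟨u,v⟩; linarith⟩)
      calc sSup (g '' Set.Icc a (a + δ)) * (a + δ - a) ≤ C * (a + δ - a) :=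
            mul_le_mul_of_nonneg_right this (by linarith)
        _ = C * δ := by ring
    have t1 : sSup (g '' Set.Icc (a + δ) (b - δ)) * (b - δ - (a + δ)) ≤ 0 := by
      have hzero : sSup (g '' Set.Icc (a + δ) (b - δ)) ≤ 0 := by
        apply Real.sSup_le _ le_rfl
        rintro y ⟨x, hx, rfl⟩
        rw [h0 x (by rcases hx with ⟨u,v⟩; linarith) (by rcases hx with ⟨u,v⟩; linarith)]
      exact mul_nonpos_of_nonpos_of_nonneg hzero (by linarith)
    have t2 : sSup (g '' Set.Icc (b - δ) b) * (b - (b - δ)) ≤ C * δ := by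
      have : sSup (g '' Set.Icc (b - δ) b) ≤ C :=
        sSup_image_le hC0 (fun x hx => hC x ⟨by rcases hx with ⟨u,v⟩; linarith, hx.2⟩)
      calc sSup (g '' Set.Icc (b - δ) b) * (b - (b - δ)) ≤ C * (b - (b - δ)) :=
            mul_le_mul_of_nonneg_right this (by linarith)
        _ = C * δ := by ring
    linarith
  have hle : upperInt g id a b ≤ upperSum g id P := by
    rw [upperInt, iInf]
    exact csInf_le ⟨0, by rintro y ⟨P', rfl⟩; exact upperSum_nonneg hg P'⟩ ⟨P, rfl⟩
  linarith

lemma key_length_le {ψ : ℝ → ℝ} {a b c d M : ℝ} {S : Set ℝ}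
    (hψpos : ∀ x ∈ Set.Icc a b, 0 < ψ x) (hψbd : ∀ x ∈ Set.Icc a b, ψ x ≤ M)
    (hac : a ≤ c) (hcd : c ≤ d) (hdb : d ≤ b) (hS : S ⊆ Set.Icc c d) :
    lengthW ψ a b S ≤ upperInt ψ id a d - upperInt ψ id a c := by
  set C : ℝ := max M 0 with hCdef
  have hC0 : 0 ≤ C := le_max_right _ _
  set g2 : ℝ → ℝ := (Set.Icc c d).indicator ψ with hg2
  have hsub_cd : Set.Icc c d ⊆ Set.Icc a b := Set.Icc_subset_Icc hac hdb
  have hg2nonneg : ∀ x, 0 ≤ g2 x := by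
    intro x
    rw [hg2]
    by_cases h : x ∈ Set.Icc c d
    · rw [Set.indicator_of_mem h]; exact le_of_lt (hψpos x (hsub_cd h))
    · rw [Set.indicator_of_notMem h]
  have hg2C : ∀ x, g2 x ≤ C := by
    intro x
    rw [hg2]
    by_cases h : x ∈ Set.Icc c d
    · rw [Set.indicator_of_mem h]; exact le_trans (hψbd x (hsub_cd h)) (le_max_left _ _)
    · rw [Set.indicator_of_notMem h]; exact hC0
  have hg1nonneg : ∀ x, 0 ≤ S.indicator ψ x := by
    intro x
    by_cases h : x ∈ S
    · rw [Set.indicator_of_mem h]; exact le_of_lt (hψpos x (hsub_cd (hS h)))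
    · rw [Set.indicator_of_notMem h]
  have hg1le : ∀ x, S.indicator ψ x ≤ g2 x := by
    intro x
    by_cases h : x ∈ S
    · rw [Set.indicator_of_mem h, hg2, Set.indicator_of_mem (hS h)]
    · rw [Set.indicator_of_notMem h]; exact hg2nonneg x
  have step1 : lengthW ψ a b S ≤ upperInt g2 id a b := by
    have : lengthW ψ a b S = upperInt (S.indicator ψ) id a b := rfl
    rw [this]
    exact upperInt_mono_f (fun x _ => hg1nonneg x) (fun x _ => hg1le x) (fun x _ => hg2C x)
  have step2 : upperInt g2 id a b ≤ upperInt g2 id a c + (upperInt g2 id c d + upperInt g2 id d b) :=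
    le_trans (upperInt_subadd hac (le_trans hcd hdb) (fun x _ => hg2nonneg x))
      (add_le_add_right (upperInt_subadd hcd hdb (fun x _ => hg2nonneg x)) _)
  have step3 : upperInt g2 id a c = 0 := by
    rcases eq_or_lt_of_le hac with rfl | h
    · exact upperInt_of_ge le_rfl
    · apply upperInt_spike h
      · intro x hx1 hx2
        rw [hg2, Set.indicator_of_notMem]
        intro hmem
        exact absurd hmem.1 (not_le.mpr hx2)
      · exact fun x _ => hg2nonneg x
      · exact fun x _ => hg2C x
  have step4 : upperInt g2 id d b = 0 := by
    rcases eq_or_lt_of_le hdb with rfl | h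
    · exact upperInt_of_ge le_rfl
    · apply upperInt_spike h
      · intro x hx1 hx2
        rw [hg2, Set.indicator_of_notMem]
        intro hmem
        exact absurd hmem.2 (not_le.mpr hx1)
      · exact fun x _ => hg2nonneg x
      · exact fun x _ => hg2C x
  have step5 : upperInt g2 id c d = upperInt ψ id c d :=
    upperInt_congr (fun x hx => by rw [hg2, Set.indicator_of_mem hx])
  have step6 : upperInt ψ id a c + upperInt ψ id c d ≤ upperInt ψ id a d :=
    upperInt_superadd (C := M) hac hcd
      (fun x hx => le_of_lt (hψpos x (Set.Icc_subset_Icc le_rfl hdb hx)))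
      (fun x hx => hψbd x (Set.Icc_subset_Icc le_rfl hdb hx))
  linarith
theorem stmt7 (a b : ℝ) (hab : a < b) (Ψ ψ : ℝ → ℝ)
    (Φ : Set ℝ → Set ℝ)
    (hψpos : ∀ x ∈ Set.Icc a b, 0 < ψ x)
    (hψbd : ∃ M, ∀ x ∈ Set.Icc a b, ψ x ≤ M)
    (hψint : RIntegrable ψ a b)
    (hΨ : ∀ x ∈ Set.Icc a b, Ψ x = Ψ a + RIntegral ψ a x)
    (hΦint : ∀ c d, a ≤ c → c ≤ d → d ≤ b →
      RIntegrable ((Φ (Set.Icc c d)).indicator fun _ => (1 : ℝ)) a b)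
    (η : ℝ) (hη : 0 < η)
    (hΦη : ∀ c d, a ≤ c → c ≤ d → d ≤ b → d - c < η → Φ (Set.Icc c d) ⊆ Set.Icc c d) :
    (∀ c d, a ≤ c → c ≤ d → d ≤ b → d - c < η →
      lengthW ψ a b (Φ (Set.Icc c d)) ≤ Ψ d - Ψ c) ∧
    (∀ f : ℝ → ℝ, BoundedOnI f a b → ∀ P : RSPartition a b,
      (∀ i < P.n, P.x (i + 1) - P.x i < η) →
      uMod f ψ Φ P - lMod f ψ Φ P ≤ upperSum f Ψ P - lowerSum f Ψ P) := by
  obtain ⟨M, hM⟩ := hψbd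
  have part1 : ∀ c d, a ≤ c → c ≤ d → d ≤ b → d - c < η →
      lengthW ψ a b (Φ (Set.Icc c d)) ≤ Ψ d - Ψ c := by
    intro c d hac hcd hdb hlen
    have hcmem : c ∈ Set.Icc a b := ⟨hac, le_trans hcd hdb⟩
    have hdmem : d ∈ Set.Icc a b := ⟨le_trans hac hcd, hdb⟩
    rw [hΨ d hdmem, hΨ c hcmem]
    have e1 : RIntegral ψ a d = upperInt ψ id a d := rfl
    have e2 : RIntegral ψ a c = upperInt ψ id a c := rfl
    have := key_length_le hψpos hM hac hcd hdb (hΦη c d hac hcd hdb hlen)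
    rw [e1, e2]
    linarith
  refine ⟨part1, ?_⟩
  rintro f ⟨Mf, hMf⟩ P hmesh
  rw [uMod, lMod, upperSum, lowerSum, ← Finset.sum_sub_distrib, ← Finset.sum_sub_distrib]
  apply Finset.sum_le_sum
  intro k hk
  rw [Finset.mem_range] at hk
  have hcd : P.x k ≤ P.x (k + 1) := le_of_lt (P.mono k hk)
  have hsub : Set.Icc (P.x k) (P.x (k + 1)) ⊆ Set.Icc a b := part_icc_subset P hk
  have hac : a ≤ P.x k := (part_x_mem P (le_of_lt hk)).1
  have hdb : P.x (k + 1) ≤ b := (part_x_mem P hk).2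
  set T : Set ℝ := Φ (Set.Icc (P.x k) (P.x (k + 1))) with hT
  have hTsub : T ⊆ Set.Icc (P.x k) (P.x (k + 1)) := hΦη _ _ hac hcd hdb (hmesh k hk)
  have hl0 : 0 ≤ lengthW ψ a b T := by
    have : lengthW ψ a b T = upperInt (T.indicator ψ) id a b := rfl
    rw [this]
    apply upperInt_nonneg
    intro x _
    by_cases h : x ∈ T
    · rw [Set.indicator_of_mem h]
      exact le_of_lt (hψpos x (hsub (hTsub h)))
    · rw [Set.indicator_of_notMem h]
  have hlΔ : lengthW ψ a b T ≤ Ψ (P.x (k + 1)) - Ψ (P.x k) :=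
    part1 _ _ hac hcd hdb (hmesh k hk)
  have hΔ0 : 0 ≤ Ψ (P.x (k + 1)) - Ψ (P.x k) := le_trans hl0 hlΔ
  have himg : (f '' Set.Icc (P.x k) (P.x (k + 1))).Nonempty :=
    (Set.nonempty_Icc.mpr hcd).image f
  have hbddA : BddAbove (f '' Set.Icc (P.x k) (P.x (k + 1))) := by
    refine ⟨Mf, ?_⟩
    rintro y ⟨x, hx, rfl⟩
    exact le_trans (le_abs_self _) (hMf x (hsub hx))
  have hbddB : BddBelow (f '' Set.Icc (P.x k) (P.x (k + 1))) := by
    refine ⟨-Mf, ?_⟩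
    rintro y ⟨x, hx, rfl⟩
    exact neg_le_of_abs_le (hMf x (hsub hx))
  have hMm : sInf (f '' Set.Icc (P.x k) (P.x (k + 1))) ≤ sSup (f '' Set.Icc (P.x k) (P.x (k + 1))) :=
    csInf_le_csSup himg hbddB hbddA
  rw [← sub_mul, ← sub_mul]
  rcases Set.eq_empty_or_nonempty T with hTe | hTne
  · rw [hTe]
    simp only [Set.image_empty, Real.sSup_empty, Real.sInf_empty, sub_self, zero_mul]
    exact mul_nonneg (sub_nonneg.mpr hMm) hΔ0
  · have hAM : sSup (f '' T) ≤ sSup (f '' Set.Icc (P.x k) (P.x (k + 1))) :=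
      csSup_le_csSup hbddA (hTne.image f) (Set.image_mono hTsub)
    have hBm : sInf (f '' Set.Icc (P.x k) (P.x (k + 1))) ≤ sInf (f '' T) :=
      csInf_le_csInf hbddB (hTne.image f) (Set.image_mono hTsub)
    have hAB : sInf (f '' T) ≤ sSup (f '' T) :=
      csInf_le_csSup (hTne.image f) (hbddB.mono (Set.image_mono hTsub))
        (hbddA.mono (Set.image_mono hTsub))
    exact mul_le_mul (by linarith) hlΔ hl0 (by linarith)
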